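/- arXiv:1106.2845 — 2 statements merged into one kernel-verified Lean document; each statement's English description precedes it below -/
import Mathlib

section
/- Let 0 < α ≤ 1 and let A : 𝓑 → ℝ be α-Hölder with constant H. Then there exist a real number λ_A > 0 and a continuous function ψ_A : 𝓑 → ℝ with ψ_A(x) > 0 for all x, such that L_A ψ_A = λ_A ψ_A, i.e. ∫_M e^{A(ax)} ψ_A(ax) da = λ_A ψ_A(x) for all x ∈ 𝓑. Moreover ψ_A can be chosen so that log ψ_A is α-Hölder with constant (2^α/(2^α − 1))·H. -/
open MeasureTheory Filter Topology

noncomputable section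

instance : Fact (0 < 2 * Real.pi) := ⟨by positivity⟩

/-- The circle `M = ℝ/2πℤ` with arc-length metric. -/
abbrev Circ : Type := AddCircle (2 * Real.pi)

/-- The normalized Haar (Lebesgue) probability measure on the circle. -/
def haarC : Measure Circ := AddCircle.haarAddCircle

/-- The Bernoulli space `𝓑 = M^ℕ`. -/
abbrev Bs : Type := ℕ → Circ

/-- The left shift `σ`. -/
def shift (x : Bs) : Bs := fun n => x (n + 1)

/-- Prepending a symbol: `cons a x = ax = (a, x₀, x₁, …)`. -/
def cons (a : Circ) (x : Bs) : Bs := fun n =>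
  match n with
  | 0 => a
  | k + 1 => x k

/-- The metric `d(x,y) = Σ_k 2^{-k} d_M(x_k, y_k)` on `𝓑`. -/
def dB (x y : Bs) : ℝ := ∑' k : ℕ, (1 / 2 : ℝ) ^ k * dist (x k) (y k)

/-- `A` is α-Hölder with constant `H` for the metric `dB`. -/
def IsHolderB (α H : ℝ) (A : Bs → ℝ) : Prop := ∀ x y, |A x - A y| ≤ H * dB x y ^ α

/-- The Ruelle operator `L_A ψ (x) = ∫_M e^{A(ax)} ψ(ax) da`. -/
def Ruelle (A : Bs → ℝ) (ψ : Bs → ℝ) : Bs → ℝ :=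
  fun x => ∫ a, Real.exp (A (cons a x)) * ψ (cons a x) ∂haarC

/-! The map `T g = log L_A(e^g)` is monotone and commutes with adding constants, so it is
`1`-Lipschitz for the sup norm; since `ax` and `ay` are twice closer than `x` and `y`, it sends
`C`-Hölder functions to `(H + C)/2^α`-Hölder ones. Hence for `s < 1` the map `g ↦ T (s g)` is an
`s`-contraction preserving the `C`-Hölder functions, `C = 2^α H/(2^α - 1)`. Its fixed point,
normalised to vanish at `0`, solves `T (s w_s) = w_s + c_s` with `|c_s| ≤ ‖T 0‖`. The `w_s` lie in a
compact set by Arzelà–Ascoli, and a limit point as `s → 1` solves `T w = w + c`, that is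
`L_A e^w = e^c e^w`. -/

open BoundedContinuousFunction NNReal

instance : IsProbabilityMeasure haarC := by
  unfold haarC; infer_instance

lemma dist_le_diam_univ {X : Type*} [PseudoMetricSpace X] [CompactSpace X] (a b : X) :
    dist a b ≤ Metric.diam (Set.univ : Set X) :=
  Metric.dist_le_diam_of_mem isCompact_univ.isBounded trivial trivial

lemma summable_dB (x y : Bs) : Summable fun k => (1 / 2 : ℝ) ^ k * dist (x k) (y k) :=
  (summable_geometric_two.mul_right _).of_nonneg_of_le (fun _ => by positivity)
    fun _ => mul_le_mul_of_nonneg_left (dist_le_diam_univ _ _) (by positivity)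

lemma dB_nonneg (x y : Bs) : 0 ≤ dB x y :=
  tsum_nonneg fun _ => by positivity

lemma dB_self (x : Bs) : dB x x = 0 := by
  simp [dB]

lemma dB_comm (x y : Bs) : dB x y = dB y x := by
  simp only [dB, dist_comm]

lemma dist_le_dB (x y : Bs) : dist (x 0) (y 0) ≤ dB x y := by
  simpa [dB] using (summable_dB x y).le_tsum 0 fun _ _ => by positivity

lemma dB_cons (a : Circ) (x y : Bs) : dB (cons a x) (cons a y) = dB x y / 2 := by
  rw [dB, (summable_dB _ _).tsum_eq_zero_add, dB, ← tsum_div_const]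
  simp only [cons, dist_self, mul_zero, zero_add, pow_succ]
  congr 1 with k
  ring

lemma continuous_dB : Continuous fun p : Bs × Bs => dB p.1 p.2 := by
  refine continuous_tsum (fun k => continuous_const.mul ?_)
    (summable_geometric_two.mul_right (Metric.diam (Set.univ : Set Circ))) fun k p => ?_
  · exact ((continuous_apply k).comp continuous_fst).dist ((continuous_apply k).comp continuous_snd)
  · rw [Real.norm_of_nonneg (by positivity)]
    exact mul_le_mul_of_nonneg_left (dist_le_diam_univ _ _) (by positivity)

lemma continuous_dB_right (x : Bs) : Continuous (dB x) :=
  (continuous_dB.comp (Continuous.prodMk_right x) :)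

lemma tendsto_dB_rpow {α : ℝ} (hα : 0 < α) (x : Bs) :
    Tendsto (fun y => dB x y ^ α) (𝓝 x) (𝓝 0) := by
  simpa [dB_self, Real.zero_rpow hα.ne'] using
    ((continuous_dB_right x).tendsto x).rpow_const (Or.inr hα.le)

lemma IsHolderB.equicontinuous {ι : Type*} {α C : ℝ} {F : ι → Bs → ℝ} (hα : 0 < α)
    (hF : ∀ i, IsHolderB α C (F i)) : Equicontinuous F := fun x =>
  Metric.equicontinuousAt_of_continuity_modulus (fun y => C * dB x y ^ α)
    (by simpa using (tendsto_dB_rpow hα x).const_mul C) F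
    (Eventually.of_forall fun y i => by rw [Real.dist_eq]; exact hF i x y)

lemma IsHolderB.continuous {α C : ℝ} {f : Bs → ℝ} (hα : 0 < α) (hf : IsHolderB α C f) :
    Continuous f :=
  (IsHolderB.equicontinuous (F := fun _ : Unit => f) hα fun _ => hf).continuous ()

lemma IsHolderB.nonneg {α C : ℝ} {f : Bs → ℝ} (hf : IsHolderB α C f) : 0 ≤ C := by
  set y : Bs := fun _ => ((2 * Real.pi / 2 : ℝ) : Circ)
  have hdist : 0 < dist ((0 : Bs) 0) (y 0) := by
    rw [Pi.zero_apply, dist_comm, dist_zero_right, AddCircle.norm_half_period_eq]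
    positivity
  have hd : 0 < dB 0 y ^ α := Real.rpow_pos_of_pos (hdist.trans_le (dist_le_dB 0 y)) α
  exact (mul_nonneg_iff_of_pos_right hd).1 ((abs_nonneg _).trans (hf 0 y))

lemma IsHolderB.zero {α C : ℝ} (hC : 0 ≤ C) : IsHolderB α C 0 := fun x y => by
  simpa using mul_nonneg hC (Real.rpow_nonneg (dB_nonneg x y) α)

lemma IsHolderB.const_mul {α C s : ℝ} {f : Bs → ℝ} (hf : IsHolderB α C f) (hs : 0 ≤ s) :
    IsHolderB α (s * C) fun x => s * f x := fun x y => by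
  rw [← mul_sub, abs_mul, abs_of_nonneg hs, mul_assoc]
  exact mul_le_mul_of_nonneg_left (hf x y) hs

lemma IsHolderB.mono {α C C' : ℝ} {f : Bs → ℝ} (hf : IsHolderB α C f) (hCC' : C ≤ C') :
    IsHolderB α C' f := fun x y =>
  (hf x y).trans (mul_le_mul_of_nonneg_right hCC' (Real.rpow_nonneg (dB_nonneg x y) α))

lemma IsHolderB.apply_cons_le {α C : ℝ} {f : Bs → ℝ} (hf : IsHolderB α C f) (a : Circ)
    (x y : Bs) : f (cons a x) ≤ f (cons a y) + C / 2 ^ α * dB x y ^ α := by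
  have h := (abs_le.1 (hf (cons a x) (cons a y))).2
  rw [dB_cons, Real.div_rpow (dB_nonneg x y) zero_le_two, mul_div_assoc', ← div_mul_eq_mul_div] at h
  linarith

lemma isClosed_setOf_isHolderB (α C : ℝ) : IsClosed {u : Bs →ᵇ ℝ | IsHolderB α C u} := by
  simp only [IsHolderB, Set.ofPred_forall]
  exact isClosed_iInter fun x => isClosed_iInter fun y =>
    isClosed_le ((continuous_eval_const x).sub (continuous_eval_const y)).abs continuous_const

lemma log_integral_exp_le_add {X : Type*} [MeasurableSpace X] {μ : Measure X} [NeZero μ]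
    {f g : X → ℝ} (hf : Integrable (fun a => Real.exp (f a)) μ)
    (hg : Integrable (fun a => Real.exp (g a)) μ) {c : ℝ} (hfg : ∀ a, f a ≤ g a + c) :
    Real.log (∫ a, Real.exp (f a) ∂μ) ≤ Real.log (∫ a, Real.exp (g a) ∂μ) + c := by
  have hle : ∫ a, Real.exp (f a) ∂μ ≤ Real.exp c * ∫ a, Real.exp (g a) ∂μ := by
    rw [← integral_const_mul]
    refine integral_mono hf (hg.const_mul _) fun a => ?_
    simpa only [← Real.exp_add, add_comm c] using Real.exp_le_exp.2 (hfg a)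
  calc _ ≤ Real.log (Real.exp c * ∫ a, Real.exp (g a) ∂μ) :=
        Real.log_le_log (integral_exp_pos hf) hle
    _ = _ := by
      rw [Real.log_mul (Real.exp_ne_zero c) (integral_exp_pos hg).ne', Real.log_exp, add_comm]

lemma continuous_cons : Continuous fun p : Circ × Bs => cons p.1 p.2 :=
  continuous_pi fun n => by
    cases n with
    | zero => exact continuous_fst
    | succ k => exact (continuous_apply k).comp continuous_snd

def logRuelle (A g : Bs → ℝ) : Bs → ℝ :=
  fun x => Real.log (Ruelle A (fun y => Real.exp (g y)) x)

lemma ruelle_exp_eq (A g : Bs → ℝ) (x : Bs) :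
    Ruelle A (fun y => Real.exp (g y)) x = ∫ a, Real.exp (A (cons a x) + g (cons a x)) ∂haarC := by
  simp only [Ruelle, Real.exp_add]

section logRuelle

variable {A : Bs → ℝ} (hA : Continuous A)
include hA

lemma integrable_exp_cons {g : Bs → ℝ} (hg : Continuous g) (x : Bs) :
    Integrable (fun a => Real.exp (A (cons a x) + g (cons a x))) haarC := by
  have hx : Continuous fun a : Circ => cons a x :=
    continuous_cons.comp (continuous_id.prodMk continuous_const)
  exact (Real.continuous_exp.comp ((hA.comp hx).add (hg.comp hx))).integrable_of_hasCompactSupport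
    (HasCompactSupport.of_compactSpace _)

lemma ruelle_exp_pos {g : Bs → ℝ} (hg : Continuous g) (x : Bs) :
    0 < Ruelle A (fun y => Real.exp (g y)) x := by
  rw [ruelle_exp_eq]
  exact integral_exp_pos (integrable_exp_cons hA hg x)

lemma exp_logRuelle {g : Bs → ℝ} (hg : Continuous g) (x : Bs) :
    Real.exp (logRuelle A g x) = Ruelle A (fun y => Real.exp (g y)) x :=
  Real.exp_log (ruelle_exp_pos hA hg x)

lemma logRuelle_le_add {g h : Bs → ℝ} (hg : Continuous g) (hh : Continuous h) {x y : Bs} {c : ℝ}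
    (hgh : ∀ a, A (cons a x) + g (cons a x) ≤ A (cons a y) + h (cons a y) + c) :
    logRuelle A g x ≤ logRuelle A h y + c := by
  simp only [logRuelle, ruelle_exp_eq]
  exact log_integral_exp_le_add (integrable_exp_cons hA hg x) (integrable_exp_cons hA hh y) hgh

lemma logRuelle_add_const {g : Bs → ℝ} (hg : Continuous g) (c : ℝ) (x : Bs) :
    logRuelle A (fun y => g y + c) x = logRuelle A g x + c := by
  have hgc : Continuous fun y => g y + c := hg.add continuous_const
  refine le_antisymm (logRuelle_le_add hA hgc hg fun a => (add_assoc _ _ _).ge) ?_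
  linarith [logRuelle_le_add hA hg hgc (x := x) (y := x) (c := -c) fun a => by linarith]

lemma abs_logRuelle_sub_le {g h : Bs → ℝ} (hg : Continuous g) (hh : Continuous h) {c : ℝ}
    (hgh : ∀ y, |g y - h y| ≤ c) (x : Bs) : |logRuelle A g x - logRuelle A h x| ≤ c := by
  rw [abs_sub_le_iff]
  constructor
  · linarith [logRuelle_le_add hA hg hh fun a => by linarith [(abs_le.1 (hgh (cons a x))).2]]
  · linarith [logRuelle_le_add hA hh hg fun a => by linarith [(abs_le.1 (hgh (cons a x))).1]]

lemma continuous_logRuelle {g : Bs → ℝ} (hg : Continuous g) : Continuous (logRuelle A g) := by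
  have hL : Continuous fun x => Ruelle A (fun y => Real.exp (g y)) x := by
    have hc : Continuous fun p : Bs × Circ => cons p.2 p.1 := continuous_cons.comp continuous_swap
    simpa [ruelle_exp_eq] using continuous_parametric_integral_of_continuous (μ := haarC)
      (f := fun x a => Real.exp (A (cons a x) + g (cons a x)))
      (Real.continuous_exp.comp ((hA.comp hc).add (hg.comp hc))) isCompact_univ
  exact hL.log fun x => (ruelle_exp_pos hA hg x).ne'

lemma isHolderB_logRuelle {α H C : ℝ} (hAH : IsHolderB α H A) {g : Bs → ℝ} (hg : Continuous g)
    (hgC : IsHolderB α C g) : IsHolderB α ((H + C) / 2 ^ α) (logRuelle A g) := by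
  have hle : ∀ x y, logRuelle A g x ≤ logRuelle A g y + (H + C) / 2 ^ α * dB x y ^ α :=
    fun x y => logRuelle_le_add hA hg hg fun a => by
      have hsplit : (H + C) / 2 ^ α * dB x y ^ α = H / 2 ^ α * dB x y ^ α + C / 2 ^ α * dB x y ^ α :=
        by ring
      linarith [hAH.apply_cons_le a x y, hgC.apply_cons_le a x y]
  intro x y
  rw [abs_sub_le_iff]
  exact ⟨by linarith [hle x y], by linarith [dB_comm y x ▸ hle y x]⟩

def logRuelleBCF (g : Bs →ᵇ ℝ) : Bs →ᵇ ℝ :=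
  mkOfCompact ⟨logRuelle A g, continuous_logRuelle hA g.continuous⟩

@[simp]
lemma logRuelleBCF_apply (g : Bs →ᵇ ℝ) (x : Bs) : logRuelleBCF hA g x = logRuelle A g x := rfl

lemma lipschitzWith_one_logRuelleBCF : LipschitzWith 1 (logRuelleBCF hA) :=
  LipschitzWith.of_dist_le_mul fun g h => by
    rw [NNReal.coe_one, one_mul, dist_le dist_nonneg]
    intro x
    simpa only [logRuelleBCF_apply, Real.dist_eq] using abs_logRuelle_sub_le hA g.continuous
      h.continuous (fun y => (Real.dist_eq _ _).symm.trans_le (dist_coe_le_dist y)) x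

end logRuelle

section discounted

variable {α H C : ℝ} {A : Bs → ℝ} (hA : Continuous A)
include hA

lemma exists_isFixedPt_logRuelleBCF_smul (hAH : IsHolderB α H A) (hC : 0 ≤ C)
    (hHC : H + C ≤ 2 ^ α * C) {s : ℝ≥0} (hs : s < 1) :
    ∃ u : Bs →ᵇ ℝ, logRuelleBCF hA ((s : ℝ) • u) = u ∧ IsHolderB α C u := by
  have hcontr : ContractingWith s fun u : Bs →ᵇ ℝ => logRuelleBCF hA ((s : ℝ) • u) := by
    refine ⟨hs, LipschitzWith.of_dist_le_mul fun u v => ?_⟩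
    calc _ ≤ dist ((s : ℝ) • u) ((s : ℝ) • v) := by
          simpa using (lipschitzWith_one_logRuelleBCF hA).dist_le_mul ((s : ℝ) • u) ((s : ℝ) • v)
      _ = s * dist u v := (dist_smul₀ (s : ℝ) u v).trans (by rw [NNReal.norm_eq])
  have hmaps : Set.MapsTo (fun u : Bs →ᵇ ℝ => logRuelleBCF hA ((s : ℝ) • u))
      {u | IsHolderB α C u} {u | IsHolderB α C u} := fun u hu => by
    refine (isHolderB_logRuelle hA hAH ((s : ℝ) • u).continuous (hu.const_mul s.2)).mono ?_
    rw [div_le_iff₀ (by positivity)]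
    linarith [mul_le_of_le_one_left hC (NNReal.coe_le_one.2 hs.le)]
  refine ⟨ContractingWith.fixedPoint _ hcontr, hcontr.fixedPoint_isFixedPt,
    (isClosed_setOf_isHolderB α C).mem_of_tendsto (hcontr.tendsto_iterate_fixedPoint 0)
      (Eventually.of_forall fun n => hmaps.iterate n (IsHolderB.zero hC))⟩

lemma exists_logRuelleBCF_smul_eq_add_const (hAH : IsHolderB α H A) (hC : 0 ≤ C)
    (hHC : H + C ≤ 2 ^ α * C) {s : ℝ≥0} (hs : s < 1) :
    ∃ w : Bs →ᵇ ℝ, (w 0 = 0 ∧ IsHolderB α C w) ∧ ∃ c : ℝ, |c| ≤ ‖logRuelleBCF hA 0‖ ∧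
      ∀ x, logRuelleBCF hA ((s : ℝ) • w) x = w x + c := by
  obtain ⟨u, hfix, hu⟩ := exists_isFixedPt_logRuelleBCF_smul hA hAH hC hHC hs
  have hnorm : ‖u‖ ≤ s * ‖u‖ + ‖logRuelleBCF hA 0‖ :=
    calc ‖u‖ = dist (logRuelleBCF hA ((s : ℝ) • u)) 0 := by rw [hfix, dist_zero_right]
      _ ≤ dist (logRuelleBCF hA ((s : ℝ) • u)) (logRuelleBCF hA 0) + dist (logRuelleBCF hA 0) 0 :=
        dist_triangle _ _ _
      _ ≤ dist ((s : ℝ) • u) 0 + ‖logRuelleBCF hA 0‖ := by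
        rw [dist_zero_right]
        gcongr
        simpa using (lipschitzWith_one_logRuelleBCF hA).dist_le_mul ((s : ℝ) • u) 0
      _ = s * ‖u‖ + ‖logRuelleBCF hA 0‖ := by rw [dist_zero_right, norm_smul, NNReal.norm_eq]
  refine ⟨u - const Bs (u 0), ⟨by simp, fun x y => by simpa using hu x y⟩, (1 - s) * u 0, ?_,
    fun x => ?_⟩
  · have hu0 : |u 0| ≤ ‖u‖ := by simpa using norm_coe_le_norm u 0
    rw [abs_mul, abs_of_pos (sub_pos.2 (NNReal.coe_lt_one.2 hs))]
    nlinarith [NNReal.coe_lt_one.2 hs]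
  · have hshift : ⇑((s : ℝ) • (u - const Bs (u 0))) = fun y => ((s : ℝ) • u) y + -(s * u 0) := by
      ext y; simp [sub_eq_add_neg]
    rw [logRuelleBCF_apply, hshift, logRuelle_add_const hA ((s : ℝ) • u).continuous,
      ← logRuelleBCF_apply hA, hfix]
    simp only [coe_sub, const_apply, Pi.sub_apply]
    ring

end discounted

lemma isCompact_normalized_isHolderB {α : ℝ} (hα : 0 < α) (C : ℝ) :
    IsCompact {w : Bs →ᵇ ℝ | w 0 = 0 ∧ IsHolderB α C w} := by
  have hcont : Continuous fun x => C * dB 0 x ^ α :=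
    continuous_const.mul ((continuous_dB_right 0).rpow_const fun _ => Or.inr hα.le)
  obtain ⟨R, hR⟩ := (isCompact_range hcont).bddAbove
  refine arzela_ascoli₂ (Metric.closedBall 0 R) (isCompact_closedBall 0 R) _
    ((isClosed_eq (continuous_eval_const 0) continuous_const).inter (isClosed_setOf_isHolderB α C))
    (fun w x hw => ?_) (IsHolderB.equicontinuous hα fun w => w.2.2)
  rw [Metric.mem_closedBall, Real.dist_eq, ← hw.1, abs_sub_comm]
  exact (hw.2 0 x).trans (hR ⟨x, rfl⟩)

lemma exists_logRuelle_eq_add_const {α H C : ℝ} (hα : 0 < α) {A : Bs → ℝ} (hAH : IsHolderB α H A)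
    (hC : 0 ≤ C) (hHC : H + C ≤ 2 ^ α * C) :
    ∃ w : Bs →ᵇ ℝ, IsHolderB α C w ∧ ∃ c : ℝ, ∀ x, logRuelle A w x = w x + c := by
  have hA := hAH.continuous hα
  set s : ℕ → ℝ≥0 := fun n => n / (n + 1)
  have hs : ∀ n, s n < 1 := fun n => (div_lt_one (by positivity)).2 (lt_add_one _)
  have hs_lim : Tendsto (fun n => (s n : ℝ)) atTop (𝓝 1) := by
    simpa [s] using tendsto_natCast_div_add_atTop (1 : ℝ)
  choose w hw c hc hwc using fun n =>
    exists_logRuelleBCF_smul_eq_add_const hA hAH hC hHC (hs n)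
  set R := ‖logRuelleBCF hA 0‖
  obtain ⟨⟨w', c'⟩, hmem, φ, hφ, hlim⟩ :=
    ((isCompact_normalized_isHolderB hα C).prod (isCompact_Icc (a := -R) (b := R))).tendsto_subseq
      (x := fun n => (w n, c n)) fun n => ⟨hw n, abs_le.1 (hc n)⟩
  have hw_lim : Tendsto (fun n => w (φ n)) atTop (𝓝 w') := (continuous_fst.tendsto _).comp hlim
  have hc_lim : Tendsto (fun n => c (φ n)) atTop (𝓝 c') := (continuous_snd.tendsto _).comp hlim
  have hT_lim : Tendsto (fun n => logRuelleBCF hA ((s (φ n) : ℝ) • w (φ n))) atTop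
      (𝓝 (logRuelleBCF hA w')) := by
    have := (hs_lim.comp hφ.tendsto_atTop).smul hw_lim
    rw [one_smul] at this
    exact ((lipschitzWith_one_logRuelleBCF hA).continuous.tendsto w').comp this
  refine ⟨w', hmem.1.2, c', fun x => tendsto_nhds_unique (hT_lim.eval_const x) ?_⟩
  simpa only [hwc] using ((hw_lim.eval_const x).add hc_lim)

theorem exists_positive_eigenfunction_general (α H : ℝ) (hα0 : 0 < α)
    (A : Bs → ℝ) (hA : IsHolderB α H A) :
    ∃ (lam : ℝ) (ψ : Bs → ℝ), 0 < lam ∧ Continuous ψ ∧ (∀ x, 0 < ψ x) ∧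
      (∀ x, Ruelle A ψ x = lam * ψ x) ∧
      IsHolderB α ((2 : ℝ) ^ α / ((2 : ℝ) ^ α - 1) * H) (fun x => Real.log (ψ x)) := by
  set C := (2 : ℝ) ^ α / ((2 : ℝ) ^ α - 1) * H
  have h2α : 0 < (2 : ℝ) ^ α - 1 := sub_pos.2 (Real.one_lt_rpow one_lt_two hα0)
  have hH : 0 ≤ H := hA.nonneg
  have hC : 0 ≤ C := by positivity
  have hHC : H + C ≤ 2 ^ α * C := by
    have hCeq : ((2 : ℝ) ^ α - 1) * C = 2 ^ α * H := by simp only [C]; field_simp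
    nlinarith
  obtain ⟨w, hw, c, hwc⟩ := exists_logRuelle_eq_add_const hα0 hA hC hHC
  refine ⟨Real.exp c, fun x => Real.exp (w x), Real.exp_pos c, by fun_prop,
    fun x => Real.exp_pos _, fun x => ?_, by simpa only [Real.log_exp] using hw⟩
  rw [← exp_logRuelle (hA.continuous hα0) w.continuous, hwc, Real.exp_add, mul_comm]

/-- existence of a strictly positive continuous eigenfunction `ψ_A`
of the Ruelle operator, with strictly positive eigenvalue `λ_A`, such that
`log ψ_A` is α-Hölder with constant `(2^α/(2^α−1))·H`. -/
theorem exists_positive_eigenfunction (α H : ℝ) (hα0 : 0 < α) (hα1 : α ≤ 1)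
    (A : Bs → ℝ) (hA : IsHolderB α H A) :
    ∃ (lam : ℝ) (ψ : Bs → ℝ), 0 < lam ∧ Continuous ψ ∧ (∀ x, 0 < ψ x) ∧
      (∀ x, Ruelle A ψ x = lam * ψ x) ∧
      IsHolderB α ((2 : ℝ) ^ α / ((2 : ℝ) ^ α - 1) * H) (fun x => Real.log (ψ x)) :=
  exists_positive_eigenfunction_general α H hα0 A hA
end
end

section
/- Let 0 < α ≤ 1 and let A : 𝓑 → ℝ be α-Hölder and normalized, i.e. ∫_M e^{A(ax)} da = 1 for all x ∈ 𝓑. Let C_{e^A} denote an α-Hölder constant of the function e^A, and let w : 𝓑 → ℝ be α-Hölder with constant C_w. Then for every n ≥ 1 and all x, y ∈ 𝓑, |L_A^n(w)(x) − L_A^n(w)(y)| ≤ [ C_{e^A}·‖w‖_∞·( 2^{−α} + 2^{−2α} + ⋯ + 2^{−nα} ) + C_w·2^{−nα} ]·d(x,y)^α, where L_A^n denotes the n-th iterate of the Ruelle operator L_A and ‖w‖_∞ the supremum norm of w. -/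
open MeasureTheory Filter Topology

noncomputable section

/-- `A` is normalized: `∫_M e^{A(ax)} da = 1` for all `x`. -/
def NormalizedB (A : Bs → ℝ) : Prop := ∀ x, ∫ a, Real.exp (A (cons a x)) ∂haarC = 1

/-! One application of the normalized Ruelle operator does not increase the sup norm and, since
`d(ax, ay) = d(x, y) / 2`, contracts the Hölder seminorm by `2^{-α}` up to the error
`C_{e^A} ‖ψ‖_∞ 2^{-α}` coming from the variation of the weight `e^A` (normalization turns
`∫ e^{A(ay)} C_ψ da` into `C_ψ`):
`|L_A ψ (x) - L_A ψ (y)| ≤ 2^{-α} (C_{e^A} ‖ψ‖_∞ + C_ψ) d(x,y)^α`.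
Iterating this affine recursion on the Hölder constants from `C_w` gives the geometric sum. -/

instance inst_s4 : IsProbabilityMeasure haarC := by unfold haarC; infer_instance

lemma integrable_haarC_of_continuous {f : Circ → ℝ} (hf : Continuous f) :
    Integrable f haarC :=
  hf.integrable_of_hasCompactSupport (HasCompactSupport.of_compactSpace f)

lemma dist_le_pi (a b : Circ) : dist a b ≤ Real.pi := by
  have h := AddCircle.norm_le_half_period (p := 2 * Real.pi) (x := a - b) (Real.two_pi_pos.ne')
  rw [abs_of_pos Real.two_pi_pos] at h
  rw [dist_eq_norm]
  linarith

namespace dB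

lemma summable (x y : Bs) : Summable fun k : ℕ => (1 / 2 : ℝ) ^ k * dist (x k) (y k) :=
  (summable_geometric_two.mul_right Real.pi).of_nonneg_of_le (fun _ => by positivity)
    fun _ => mul_le_mul_of_nonneg_left (dist_le_pi _ _) (by positivity)

lemma nonneg (x y : Bs) : 0 ≤ dB x y :=
  tsum_nonneg fun _ => by positivity

lemma le_two_pi (x y : Bs) : dB x y ≤ 2 * Real.pi :=
  calc dB x y ≤ ∑' k : ℕ, (1 / 2 : ℝ) ^ k * Real.pi :=
        (summable x y).tsum_le_tsum
          (fun _ => mul_le_mul_of_nonneg_left (dist_le_pi _ _) (by positivity))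
          (summable_geometric_two.mul_right Real.pi)
    _ = 2 * Real.pi := by rw [tsum_mul_right, tsum_geometric_two]

@[simp]
lemma self (x : Bs) : dB x x = 0 := by
  simp [dB]

lemma cons_cons (a b : Circ) (x y : Bs) :
    dB (cons a x) (cons b y) = dist a b + 1 / 2 * dB x y := by
  rw [dB, (summable _ _).tsum_eq_zero_add, dB, ← tsum_mul_left]
  simp only [pow_zero, one_mul, pow_succ]
  congr 1
  exact tsum_congr fun k => by simp only [cons]; ring

end dB

namespace IsHolderB

variable {α C : ℝ} {f : Bs → ℝ}

lemma cons_same (hf : IsHolderB α C f) (a : Circ) (x y : Bs) :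
    |f (cons a x) - f (cons a y)| ≤ (1 / 2 : ℝ) ^ α * (C * dB x y ^ α) := by
  have h := hf (cons a x) (cons a y)
  rwa [dB.cons_cons, dist_self, zero_add, Real.mul_rpow (by norm_num) (dB.nonneg x y),
    mul_left_comm] at h

lemma continuous_cons (hf : IsHolderB α C f) (hα : 0 < α) (x : Bs) :
    Continuous fun a => f (cons a x) := by
  refine continuous_iff_continuousAt.2 fun b => ?_
  have hbound : ∀ a, dist (f (cons a x)) (f (cons b x)) ≤ C * dist a b ^ α := fun a => by
    simpa [Real.dist_eq, dB.cons_cons] using hf (cons a x) (cons b x)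
  have hlim : Tendsto (fun a => C * dist a b ^ α) (𝓝 b) (𝓝 0) := by
    have hcont : Continuous fun a : Circ => C * dist a b ^ α :=
      continuous_const.mul ((continuous_id.dist continuous_const).rpow_const
        fun _ => Or.inr hα.le)
    simpa [Real.zero_rpow hα.ne'] using hcont.tendsto b
  exact tendsto_iff_dist_tendsto_zero.2 (squeeze_zero (fun _ => dist_nonneg) hbound hlim)

lemma bddAbove_range_abs (hf : IsHolderB α C f) (hα : 0 ≤ α) :
    BddAbove (Set.range fun z => |f z|) := by
  let z₀ : Bs := fun _ => 0
  refine ⟨|f z₀| + |C| * (2 * Real.pi) ^ α, Set.forall_mem_range.2 fun z => ?_⟩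
  have hd : dB z z₀ ^ α ≤ (2 * Real.pi) ^ α :=
    Real.rpow_le_rpow (dB.nonneg _ _) (dB.le_two_pi _ _) hα
  calc |f z| ≤ |f z₀| + |f z - f z₀| := by linarith [abs_sub_abs_le_abs_sub (f z) (f z₀)]
    _ ≤ |f z₀| + C * dB z z₀ ^ α := by linarith [hf z z₀]
    _ ≤ |f z₀| + |C| * (2 * Real.pi) ^ α := add_le_add_right
        (mul_le_mul (le_abs_self C) hd (Real.rpow_nonneg (dB.nonneg _ _) _) (abs_nonneg C)) _

end IsHolderB

section Ruelle

variable {α CeA : ℝ} {A : Bs → ℝ}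

lemma abs_ruelle_le (hα : 0 < α) (hnorm : NormalizedB A)
    (hCeA : IsHolderB α CeA (fun x => Real.exp (A x))) {ψ : Bs → ℝ} {S : ℝ}
    (hψ : ∀ z, |ψ z| ≤ S) (x : Bs) : |Ruelle A ψ x| ≤ S :=
  calc |Ruelle A ψ x| = ‖∫ a, Real.exp (A (cons a x)) * ψ (cons a x) ∂haarC‖ := rfl
    _ ≤ ∫ a, Real.exp (A (cons a x)) * S ∂haarC := by
        refine norm_integral_le_of_norm_le
          ((integrable_haarC_of_continuous (hCeA.continuous_cons hα x)).mul_const S)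
          (Eventually.of_forall fun a => ?_)
        rw [Real.norm_eq_abs, abs_mul, Real.abs_exp]
        exact mul_le_mul_of_nonneg_left (hψ _) (Real.exp_pos _).le
    _ = S := by rw [integral_mul_const, hnorm x, one_mul]

lemma abs_iterate_ruelle_le (hα : 0 < α) (hnorm : NormalizedB A)
    (hCeA : IsHolderB α CeA (fun x => Real.exp (A x))) {w : Bs → ℝ} {S : ℝ}
    (hw : ∀ z, |w z| ≤ S) (n : ℕ) (x : Bs) : |(Ruelle A)^[n] w x| ≤ S := by
  induction n generalizing x with
  | zero => exact hw x
  | succ n ih =>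
    rw [Function.iterate_succ_apply']
    exact abs_ruelle_le hα hnorm hCeA ih x

lemma IsHolderB.ruelle {ψ : Bs → ℝ} {C S : ℝ} (hψ : IsHolderB α C ψ) (hS : ∀ z, |ψ z| ≤ S)
    (hα : 0 < α) (hnorm : NormalizedB A) (hCeA : IsHolderB α CeA (fun x => Real.exp (A x))) :
    IsHolderB α ((1 / 2 : ℝ) ^ α * (CeA * S + C)) (Ruelle A ψ) := by
  intro x y
  set e : Circ → Bs → ℝ := fun a z => Real.exp (A (cons a z))
  set t := (1 / 2 : ℝ) ^ α * dB x y ^ α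
  have he_int : ∀ z, Integrable (e · z) haarC := fun z =>
    integrable_haarC_of_continuous (hCeA.continuous_cons hα z)
  have hterm_int : ∀ z, Integrable (fun a => e a z * ψ (cons a z)) haarC := fun z =>
    integrable_haarC_of_continuous
      ((hCeA.continuous_cons hα z).mul (hψ.continuous_cons hα z))
  have hpointwise : ∀ a, ‖e a x * ψ (cons a x) - e a y * ψ (cons a y)‖
      ≤ CeA * t * S + e a y * (C * t) := fun a => by
    have hweight := mul_le_mul (hCeA.cons_same a x y) (hS (cons a x)) (abs_nonneg _)
      ((abs_nonneg _).trans (hCeA.cons_same a x y))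
    have hψ_cons := mul_le_mul_of_nonneg_left (hψ.cons_same a x y) (Real.exp_pos (A (cons a y))).le
    calc ‖e a x * ψ (cons a x) - e a y * ψ (cons a y)‖
        = |(e a x - e a y) * ψ (cons a x) + e a y * (ψ (cons a x) - ψ (cons a y))| := by
          rw [Real.norm_eq_abs]; ring_nf
      _ ≤ |e a x - e a y| * |ψ (cons a x)| + e a y * |ψ (cons a x) - ψ (cons a y)| := by
          refine (abs_add_le _ _).trans_eq ?_
          rw [abs_mul, abs_mul, Real.abs_exp]
      _ ≤ CeA * t * S + e a y * (C * t) := by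
          simp only [e, t] at hweight hψ_cons ⊢; linarith
  calc |Ruelle A ψ x - Ruelle A ψ y|
      = ‖∫ a, (e a x * ψ (cons a x) - e a y * ψ (cons a y)) ∂haarC‖ := by
        rw [integral_sub (hterm_int x) (hterm_int y)]; rfl
    _ ≤ ∫ a, (CeA * t * S + e a y * (C * t)) ∂haarC :=
        norm_integral_le_of_norm_le ((integrable_const _).add ((he_int y).mul_const _))
          (Eventually.of_forall hpointwise)
    _ = (1 / 2 : ℝ) ^ α * (CeA * S + C) * dB x y ^ α := by
        rw [integral_add (integrable_const _) ((he_int y).mul_const _), integral_const,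
          integral_mul_const, hnorm y]
        simp only [t, probReal_univ, smul_eq_mul]
        ring

end Ruelle

lemma sum_Icc_one_pow_succ (r : ℝ) (n : ℕ) :
    ∑ i ∈ Finset.Icc 1 (n + 1), r ^ i = r * (1 + ∑ i ∈ Finset.Icc 1 n, r ^ i) := by
  induction n with
  | zero => simp
  | succ n ih =>
    conv_lhs => rw [Finset.sum_Icc_succ_top (by omega), ih]
    rw [Finset.sum_Icc_succ_top (by omega : 1 ≤ n + 1)]
    ring

theorem iterate_holder_estimate_general (α : ℝ) (hα0 : 0 < α)
    (A : Bs → ℝ) (hnorm : NormalizedB A)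
    (CeA : ℝ) (hCeA : IsHolderB α CeA (fun x => Real.exp (A x)))
    (w : Bs → ℝ) (Cw : ℝ) (hw : IsHolderB α Cw w) :
    ∀ n : ℕ, 1 ≤ n → ∀ x y,
      |(Ruelle A)^[n] w x - (Ruelle A)^[n] w y| ≤
        (CeA * (⨆ z : Bs, |w z|) * (∑ i ∈ Finset.Icc 1 n, (((1 : ℝ) / 2) ^ α) ^ i)
          + Cw * (((1 : ℝ) / 2) ^ α) ^ n) * dB x y ^ α := by
  set S := ⨆ z : Bs, |w z|
  have hS : ∀ z, |w z| ≤ S := le_ciSup (hw.bddAbove_range_abs hα0.le)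
  suffices ∀ n, IsHolderB α (CeA * S * (∑ i ∈ Finset.Icc 1 n, (((1 : ℝ) / 2) ^ α) ^ i)
      + Cw * (((1 : ℝ) / 2) ^ α) ^ n) ((Ruelle A)^[n] w) from fun n _ => this n
  intro n
  induction n with
  | zero => simpa using hw
  | succ n ih =>
    rw [Function.iterate_succ_apply']
    convert ih.ruelle (abs_iterate_ruelle_le hα0 hnorm hCeA hS n) hα0 hnorm hCeA using 2
    rw [sum_Icc_one_pow_succ]
    ring

/-- basic estimate for iterates of the normalized Ruelle operator on
Hölder functions. -/
theorem iterate_holder_estimate (α : ℝ) (hα0 : 0 < α) (hα1 : α ≤ 1)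
    (A : Bs → ℝ) (H : ℝ) (hA : IsHolderB α H A) (hnorm : NormalizedB A)
    (CeA : ℝ) (hCeA : IsHolderB α CeA (fun x => Real.exp (A x)))
    (w : Bs → ℝ) (Cw : ℝ) (hw : IsHolderB α Cw w) :
    ∀ n : ℕ, 1 ≤ n → ∀ x y,
      |(Ruelle A)^[n] w x - (Ruelle A)^[n] w y| ≤
        (CeA * (⨆ z : Bs, |w z|) * (∑ i ∈ Finset.Icc 1 n, (((1 : ℝ) / 2) ^ α) ^ i)
          + Cw * (((1 : ℝ) / 2) ^ α) ^ n) * dB x y ^ α :=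
  iterate_holder_estimate_general α hα0 A hnorm CeA hCeA w Cw hw
end
end
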